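/- arXiv:math/0403236 — 2 statements merged into one kernel-verified Lean document; each statement's English description precedes it below -/
import Mathlib

section
/- Let A be a C*-algebra, B a unital C*-algebra, and h₁, h₂ : A → B two *-homomorphisms. Let G be a normal subgroup of the unitary group U(B). Suppose (u_n) is a sequence of unitaries in B with lim_{n→∞} ‖u_n* h₁(a) u_n − h₂(a)‖ = 0 for every a ∈ A. If h₁ and h₂ are G-strongly approximately unitarily equivalent, then there exist a strictly increasing sequence n(1) < n(2) < ⋯ of natural numbers and a sequence of unitaries v_k ∈ U(B) such that u_{n(k)}⁻¹ v_k ∈ G for every k and lim_{k→∞} ‖v_k h₁(a) − h₁(a) v_k‖ = 0 for every a ∈ A. -/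
/-! Take `n = id` and `v k = u k * (w k)⁻¹`, where `w` witnesses the `G`-strong equivalence;
then `(u k)⁻¹ * v k = (w k)⁻¹ ∈ G`. Conjugating by unitaries is isometric, so the commutator
`[v k, h₁ a]` has the norm of `w k⋆ (h₁ a) w k - u k⋆ (h₁ a) u k`, and both conjugates tend
to `h₂ a`. -/

open Filter Topology

theorem CStarRing.norm_commutator_mul_star_eq {B : Type*} [NormedRing B] [StarRing B]
    [CStarRing B] (u w : unitary B) (x : B) :
    ‖(u : B) * star (w : B) * x - x * ((u : B) * star (w : B))‖
      = ‖star (w : B) * x * w - star (u : B) * x * u‖ := by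
  have hconj : star (w : B) * x * w - star (u : B) * x * u
      = star (u : B) * ((u : B) * star (w : B) * x - x * ((u : B) * star (w : B))) * w := by
    simp only [mul_sub, sub_mul, ← mul_assoc, Unitary.coe_star_mul_self, one_mul]
    simp only [mul_assoc, Unitary.coe_star_mul_self, mul_one]
  rw [hconj, norm_mul_coe_unitary, norm_mem_unitary_mul _ (Unitary.star_mem u.2)]

theorem strong_approx_unitary_equiv_necessary_general
    {A B : Type*}
    [NonUnitalNormedRing A] [StarRing A] [NormedSpace ℂ A]
    [NormedRing B] [StarRing B] [CStarRing B] [NormedAlgebra ℂ B]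
    (h₁ h₂ : A →⋆ₙₐ[ℂ] B) (G : Subgroup (unitary B))
    (u : ℕ → unitary B)
    (hu : ∀ a : A,
      Tendsto (fun n => ‖star (u n : B) * h₁ a * (u n : B) - h₂ a‖) atTop (𝓝 0))
    (hequiv : ∃ w : ℕ → unitary B, (∀ n, w n ∈ G) ∧ ∀ a : A,
      Tendsto (fun n => ‖star (w n : B) * h₁ a * (w n : B) - h₂ a‖) atTop (𝓝 0)) :
    ∃ n : ℕ → ℕ, StrictMono n ∧ ∃ v : ℕ → unitary B,
      (∀ k, (u (n k))⁻¹ * v k ∈ G) ∧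
      ∀ a : A, Tendsto (fun k => ‖(v k : B) * h₁ a - h₁ a * (v k : B)‖) atTop (𝓝 0) := by
  obtain ⟨w, hwG, hw⟩ := hequiv
  refine ⟨id, strictMono_id, fun k => u k * (w k)⁻¹,
    fun k => by simpa using G.inv_mem (hwG k), fun a => ?_⟩
  have hw_conj := tendsto_iff_norm_sub_tendsto_zero.2 (hw a)
  have hu_conj := tendsto_iff_norm_sub_tendsto_zero.2 (hu a)
  simpa [← Unitary.star_eq_inv, CStarRing.norm_commutator_mul_star_eq] using (hw_conj.sub hu_conj).norm

/-- Forward direction of Lemma 3.2(2): if `h₂ = lim ad u_n ∘ h₁` and `h₁`, `h₂` are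
`G`-strongly approximately unitarily equivalent, then there is a subsequence `u_{n(k)}`
and unitaries `v_k` in the same classes modulo `G` that asymptotically commute
with the range of `h₁`. -/
theorem strong_approx_unitary_equiv_necessary
    {A B : Type*}
    [NonUnitalNormedRing A] [StarRing A] [CStarRing A] [NormedSpace ℂ A]
    [IsScalarTower ℂ A A] [SMulCommClass ℂ A A] [StarModule ℂ A] [CompleteSpace A]
    [NormedRing B] [StarRing B] [CStarRing B] [NormedAlgebra ℂ B]
    [StarModule ℂ B] [CompleteSpace B]
    (h₁ h₂ : A →⋆ₙₐ[ℂ] B) (G : Subgroup (unitary B)) [G.Normal]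
    (u : ℕ → unitary B)
    (hu : ∀ a : A,
      Tendsto (fun n => ‖star (u n : B) * h₁ a * (u n : B) - h₂ a‖) atTop (𝓝 0))
    (hequiv : ∃ w : ℕ → unitary B, (∀ n, w n ∈ G) ∧ ∀ a : A,
      Tendsto (fun n => ‖star (w n : B) * h₁ a * (w n : B) - h₂ a‖) atTop (𝓝 0)) :
    ∃ n : ℕ → ℕ, StrictMono n ∧ ∃ v : ℕ → unitary B,
      (∀ k, (u (n k))⁻¹ * v k ∈ G) ∧
      ∀ a : A, Tendsto (fun k => ‖(v k : B) * h₁ a - h₁ a * (v k : B)‖) atTop (𝓝 0) :=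
  strong_approx_unitary_equiv_necessary_general h₁ h₂ G u hu hequiv
end

section
/- Let F be an abelian group, let P = ∏_{n∈ℕ} F be the direct product of countably many copies of F, let S ≤ P be the subgroup of finitely supported sequences (the direct sum ⊕_{n∈ℕ} F), and let π : P → P/S be the quotient homomorphism. Then for every finitely generated subgroup T of P/S there exists a group homomorphism f : T → P such that π(f(t)) = t for every t ∈ T. -/
/-!
Write `T` as the image of `ℤⁿ` and lift the generators to `∏ F`: this gives `φ : ℤⁿ → ∏ F` such
that `π ∘ φ` maps onto `T` with kernel `K`. As `ℤⁿ` is Noetherian, `K` is finitely generated, so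
`φ(K) ⊆ ⊕ F` is supported on finitely many coordinates. Zeroing those coordinates does not
change `π` but kills `φ(K)`, so the truncated `φ` factors through `T`.
-/

/-- The subgroup `⊕_{n ∈ ℕ} F` of finitely supported sequences inside `∏_{n ∈ ℕ} F`. -/
def finitelySupported (F : Type*) [AddCommGroup F] : AddSubgroup (ℕ → F) where
  carrier := {x | (Function.support x).Finite}
  add_mem' hx hy := Set.Finite.subset (hx.union hy) (Function.support_add _ _)
  zero_mem' := by simp [Function.support_zero]
  neg_mem' hx := by simpa [Function.support_neg] using hx

theorem QuotientAddGroup.exists_lift_of_fg {G : Type*} [AddCommGroup G] {S : AddSubgroup G}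
    (hkill : ∀ s : Set G, s.Finite → s ⊆ S →
      ∃ τ : G →+ G, (mk' S).comp τ = mk' S ∧ ∀ x ∈ s, τ x = 0)
    (T : AddSubgroup (G ⧸ S)) (hT : T.FG) :
    ∃ f : T →+ G, ∀ t : T, mk' S (f t) = t := by
  have : Module.Finite ℤ T :=
    Module.Finite.iff_addGroup_fg.mpr (AddGroup.fg_iff_addSubgroup_fg T |>.mpr hT)
  obtain ⟨n, f, hf⟩ := Module.Finite.exists_fin' ℤ T
  obtain ⟨φ, hφ⟩ := Module.projective_lifting_property (mk' S).toIntLinearMap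
    (T.subtype.toIntLinearMap ∘ₗ f) (mk'_surjective S)
  have hφ_apply (a : Fin n → ℤ) : mk' S (φ a) = f a := LinearMap.congr_fun hφ a
  obtain ⟨r, hr⟩ : (LinearMap.ker f).FG := IsNoetherian.noetherian _
  obtain ⟨τ, hτ, hτr⟩ := hkill (φ '' r) (r.finite_toSet.image φ) <| by
    rintro _ ⟨a, ha, rfl⟩
    have ha : f a = 0 := by rw [← LinearMap.mem_ker, ← hr]; exact Submodule.subset_span ha
    rw [SetLike.mem_coe, ← eq_zero_iff, ← mk'_apply, hφ_apply, ha, ZeroMemClass.coe_zero]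
  have hker : LinearMap.ker f ≤ LinearMap.ker (τ.toIntLinearMap ∘ₗ φ) := by
    rw [← hr, Submodule.span_le]
    exact fun a ha => hτr _ (Set.mem_image_of_mem φ ha)
  refine ⟨f.toAddMonoidHom.liftOfSurjective hf ⟨(τ.toIntLinearMap ∘ₗ φ).toAddMonoidHom, hker⟩,
    fun t => ?_⟩
  obtain ⟨a, rfl⟩ := hf t
  change mk' S (f.toAddMonoidHom.liftOfSurjective hf _ (f.toAddMonoidHom a)) = _
  rw [AddMonoidHom.liftOfRightInverse_comp_apply]
  exact (DFunLike.congr_fun hτ (φ a)).trans (hφ_apply a)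

theorem mk'_comp_indicatorHom_compl {F : Type*} [AddCommGroup F] {U : Set ℕ} (hU : U.Finite) :
    (QuotientAddGroup.mk' (finitelySupported F)).comp (Set.indicatorHom F Uᶜ) =
      QuotientAddGroup.mk' (finitelySupported F) := by
  ext y
  show ((Uᶜ.indicator y : ℕ → F) : (ℕ → F) ⧸ finitelySupported F) = y
  rw [QuotientAddGroup.eq_iff_sub_mem, Set.indicator_compl, sub_sub_cancel_left]
  exact neg_mem (hU.subset Set.support_indicator_subset)

/-- Every finitely generated subgroup `T` of `(∏ F)/(⊕ F)` lifts: there is a homomorphism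
`f : T → ∏ F` with `π ∘ f = id` on `T`, where `π` is the quotient map. -/
theorem exists_lift_of_fg_subgroup_quotient
    (F : Type*) [AddCommGroup F]
    (T : AddSubgroup ((ℕ → F) ⧸ finitelySupported F)) (hT : T.FG) :
    ∃ f : T →+ (ℕ → F), ∀ t : T,
      QuotientAddGroup.mk' (finitelySupported F) (f t) = (t : (ℕ → F) ⧸ finitelySupported F) := by
  refine QuotientAddGroup.exists_lift_of_fg (fun s hs hsS => ?_) T hT
  set U := ⋃ x ∈ s, Function.support x
  refine ⟨Set.indicatorHom F Uᶜ, mk'_comp_indicatorHom_compl (hs.biUnion fun x hx => hsS hx),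
    fun x hx => Set.indicator_eq_zero'.mpr ?_⟩
  exact Set.disjoint_compl_right_iff_subset.mpr (Set.subset_biUnion_of_mem hx)
end
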